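/- arXiv:1411.1217 — 2 statements merged into one kernel-verified Lean document; each statement's English description precedes it below -/
import Mathlib

section
/- Let M be a complex n×n matrix with spectral radius strictly less than 1, and let 𝓛 be the linear map on matrices whose vectorized representation is M (i.e., vec(𝓛(X)) = M vec(X)), mapping the positive semidefinite cone into itself. Then for every positive definite V there exists a unique matrix P solving P − 𝓛(P) = V, it is given by P = ∑_{i=0}^∞ 𝓛^i(V), and P is positive definite. -/
open scoped ComplexOrder

/-- The spectral radius of a complex square matrix. -/
noncomputable def specRad {m : Type*} [Fintype m] [DecidableEq m]
    (A : Matrix m m ℂ) : ℝ :=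
  sSup ((fun z : ℂ => ‖z‖) '' spectrum ℂ A)

open Filter Topology Matrix

/-!
Under vectorization `𝓛` becomes `M`, so by Gelfand's formula `‖M^i‖` decays geometrically and
`∑ 𝓛^i V` converges; shifting the series shows that its sum `P` solves `P - 𝓛 P = V`.
As `1` lies outside the spectrum of `M`, `I - M`, hence `X ↦ X - 𝓛 X`, is injective.
All partial sums are positive semidefinite and that cone is closed, so `P` is positive
semidefinite, and then `P = V + 𝓛 P` is positive definite.
-/

theorem summable_norm_pow_of_spectralRadius_lt_one {A : Type*} [NormedRing A] [NormedAlgebra ℂ A]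
    [CompleteSpace A] {a : A} (h : spectralRadius ℂ a < 1) :
    Summable (fun i : ℕ => ‖a ^ i‖) := by
  obtain ⟨r, hr, hr1⟩ := ENNReal.lt_iff_exists_nnreal_btwn.mp h
  have hgeom : ∀ᶠ i : ℕ in atTop, ‖a ^ i‖ ≤ (r : ℝ) ^ i := by
    filter_upwards [(spectrum.pow_norm_pow_one_div_tendsto_nhds_spectralRadius a).eventually_lt_const
      hr, eventually_ge_atTop 1] with i hi hi1
    rw [← ENNReal.ofReal_coe_nnreal, ENNReal.ofReal_lt_ofReal_iff'] at hi
    calc ‖a ^ i‖ = (‖a ^ i‖ ^ (1 / (i : ℝ))) ^ i := by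
          rw [← Real.rpow_natCast, ← Real.rpow_mul (norm_nonneg _),
            one_div_mul_cancel (by positivity), Real.rpow_one]
      _ ≤ (r : ℝ) ^ i := pow_le_pow_left₀ (by positivity) hi.1.le i
  exact .of_norm_bounded_eventually_nat (summable_geometric_of_lt_one r.coe_nonneg
    (by exact_mod_cast hr1)) (by simpa using hgeom)

theorem sub_apply_eq_of_hasSum_pow_apply {R E : Type*} [Semiring R] [AddCommGroup E] [Module R E]
    [TopologicalSpace E] [IsTopologicalAddGroup E] [T2Space E] {f : Module.End R E}
    (hf : Continuous f) {v x : E} (h : HasSum (fun i : ℕ => (f ^ i) v) x) : x - f x = v := by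
  have hshift : HasSum (fun i : ℕ => (f ^ (i + 1)) v) (x - v) := by
    simpa using (hasSum_nat_add_iff' 1).mpr h
  have hmap : HasSum (fun i : ℕ => f ((f ^ i) v)) (f x) := h.map f.toAddMonoidHom hf
  simp only [← Module.End.mul_apply, ← pow_succ'] at hmap
  rw [hmap.unique hshift, sub_sub_cancel]

namespace Matrix

section SpectralRadius

variable {n : Type*} [Fintype n] [DecidableEq n]

theorem spectralRadius_le_ofReal_specRad (A : Matrix n n ℂ) :
    spectralRadius ℂ A ≤ ENNReal.ofReal (specRad A) :=
  iSup₂_le fun z hz => by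
    rw [← enorm_eq_nnnorm, ← ofReal_norm]
    exact ENNReal.ofReal_le_ofReal <|
      le_csSup (A.finite_spectrum.image _).bddAbove ⟨z, hz, rfl⟩

theorem isUnit_one_sub_of_spectralRadius_lt_one {A : Matrix n n ℂ}
    (h : spectralRadius ℂ A < 1) : IsUnit (1 - A) := by
  have h1 := spectrum.mem_resolventSet_of_spectralRadius_lt (k := (1 : ℂ)) (by simpa using h)
  rwa [spectrum.mem_resolventSet_iff, map_one] at h1

/-- The `ℓ∞` operator norm makes matrices a Banach algebra without changing their topology. -/
theorem summable_pow_of_spectralRadius_lt_one {A : Matrix n n ℂ} (h : spectralRadius ℂ A < 1) :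
    Summable (fun i : ℕ => A ^ i) := by
  let _ : NormedRing (Matrix n n ℂ) := Matrix.linftyOpNormedRing
  let _ : NormedAlgebra ℂ (Matrix n n ℂ) := Matrix.linftyOpNormedAlgebra
  exact .of_norm (summable_norm_pow_of_spectralRadius_lt_one h)

end SpectralRadius

section PosSemidef

variable {n R : Type*} [Fintype n] [Ring R] [PartialOrder R] [StarRing R] [TopologicalSpace R]
  [IsTopologicalRing R] [ContinuousStar R] [OrderClosedTopology R]

theorem isClosed_setOf_posSemidef : IsClosed {A : Matrix n n R | A.PosSemidef} := by
  simp only [posSemidef_iff_dotProduct_mulVec, Set.ofPred_and, Set.ofPred_forall]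
  refine .inter (isClosed_eq continuous_id.matrix_conjTranspose continuous_id)
    (isClosed_iInter fun x => isClosed_le continuous_const ?_)
  exact continuous_const.dotProduct (continuous_id.matrix_mulVec continuous_const)

theorem _root_.HasSum.posSemidef [AddLeftMono R] {ι : Type*} {f : ι → Matrix n n R}
    {A : Matrix n n R} (h : HasSum f A) (hf : ∀ i, (f i).PosSemidef) : A.PosSemidef :=
  isClosed_setOf_posSemidef.mem_of_tendsto h <|
    .of_forall fun s => posSemidef_sum s fun i _ => hf i

end PosSemidef

end Matrix

section Vectorization

variable {ι E : Type*} [Fintype ι] [DecidableEq ι] [AddCommGroup E] [Module ℂ E]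
  [TopologicalSpace E] {L : Module.End ℂ E} {M : Matrix ι ι ℂ} (vec : E ≃L[ℂ] (ι → ℂ))

theorem map_pow_apply_eq_pow_mulVec (hM : ∀ X, M *ᵥ vec X = vec (L X)) (i : ℕ) (X : E) :
    vec ((L ^ i) X) = (M ^ i) *ᵥ vec X := by
  induction i generalizing X with
  | zero => simp
  | succ i ih => rw [pow_succ, Module.End.mul_apply, ih, ← hM, pow_succ, mulVec_mulVec]

theorem summable_pow_apply_of_spectralRadius_lt_one (hM : ∀ X, M *ᵥ vec X = vec (L X))
    (hρ : spectralRadius ℂ M < 1) (X : E) : Summable (fun i : ℕ => (L ^ i) X) := by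
  rw [← vec.summable]
  simp only [map_pow_apply_eq_pow_mulVec vec hM]
  exact (summable_pow_of_spectralRadius_lt_one hρ).map (mulVec.addMonoidHomLeft (vec X))
    (continuous_id.matrix_mulVec continuous_const)

theorem sub_apply_injective_of_isUnit_one_sub (hM : ∀ X, M *ᵥ vec X = vec (L X))
    (hM1 : IsUnit (1 - M)) : Function.Injective (fun X => X - L X) := by
  have hvec : ∀ X, vec (X - L X) = (1 - M) *ᵥ vec X := fun X => by
    rw [sub_mulVec, one_mulVec, hM, map_sub]
  intro X Y hXY
  exact vec.injective (mulVec_injective_iff_isUnit.mpr hM1 (by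
    simpa only [hvec] using congrArg vec hXY))

end Vectorization

/-- If `𝓛` is linear with vectorized representation `M` of spectral radius
less than one, preserving the positive semidefinite cone, then for every
positive definite `V` there is a unique `P` with `P − 𝓛(P) = V`, given by
`P = ∑_{i≥0} 𝓛^i(V)`, and `P` is positive definite. -/
theorem unique_solution_of_contraction {n : ℕ}
    (L : Matrix (Fin n) (Fin n) ℂ →ₗ[ℂ] Matrix (Fin n) (Fin n) ℂ)
    (hpsd : ∀ X : Matrix (Fin n) (Fin n) ℂ, X.PosSemidef → (L X).PosSemidef)
    (M : Matrix (Fin n × Fin n) (Fin n × Fin n) ℂ)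
    (hM : ∀ X : Matrix (Fin n) (Fin n) ℂ,
      (M.mulVec fun p => X p.1 p.2) = fun p => (L X) p.1 p.2)
    (hρ : specRad M < 1)
    (V : Matrix (Fin n) (Fin n) ℂ) (hV : V.PosDef) :
    (∃! P : Matrix (Fin n) (Fin n) ℂ, P - L P = V) ∧
      ∀ P : Matrix (Fin n) (Fin n) ℂ, P - L P = V →
        (HasSum (fun i : ℕ => (L ^ i) V) P ∧ P.PosDef) := by
  let vec : Matrix (Fin n) (Fin n) ℂ ≃L[ℂ] (Fin n × Fin n → ℂ) :=
    (LinearEquiv.curry ℂ ℂ (Fin n) (Fin n)).symm.toContinuousLinearEquiv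
  have hvec : ∀ X, M *ᵥ vec X = vec (L X) := hM
  have hρM : spectralRadius ℂ M < 1 :=
    (M.spectralRadius_le_ofReal_specRad).trans_lt (ENNReal.ofReal_lt_one.mpr hρ)
  obtain ⟨P₀, hP₀⟩ := summable_pow_apply_of_spectralRadius_lt_one vec hvec hρM V
  have hfix : P₀ - L P₀ = V :=
    sub_apply_eq_of_hasSum_pow_apply L.continuous_of_finiteDimensional hP₀
  have huniq : ∀ P, P - L P = V → P = P₀ := fun P hP =>
    sub_apply_injective_of_isUnit_one_sub vec hvec (isUnit_one_sub_of_spectralRadius_lt_one hρM)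
      (hP.trans hfix.symm)
  have hterms : ∀ i : ℕ, ((L ^ i) V).PosSemidef := fun i => by
    induction i with
    | zero => exact hV.posSemidef
    | succ i ih => rw [pow_succ', Module.End.mul_apply]; exact hpsd _ ih
  have hP₀pd : P₀.PosDef := by
    rw [← sub_add_cancel P₀ (L P₀), hfix]
    exact hV.add_posSemidef (hpsd _ (hP₀.posSemidef hterms))
  exact ⟨⟨P₀, hfix, huniq⟩, fun P hP => huniq P hP ▸ ⟨hP₀, hP₀pd⟩⟩
end

section
/- Let A be a real n×n matrix, 0 < q < 1, Q̃ positive definite, and η > 1 with η(1−q)ρ(A)² < 1, where ρ(A) is the spectral radius. Let X and X̃ be the (unique positive definite) solutions of X = (1−q) A X Aᵀ + Q̃ and η^{-1} X̃ = (1−q) A X̃ Aᵀ + Q̃ respectively. Then for every ε > 0 there exists δ > 0 such that 1 < η ≤ 1 + δ implies X̃ ≤ (1 + ε) X in the Loewner order. -/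
open Matrix

/-!
Write `s = 1 - q`. Once `s ρ(A)² < 1`, Gelfand's formula makes `∑ sᴺ ‖Aᴺ‖²` converge, so every
solution of `X = s A X Aᵀ + R` is the series `∑ sⁱ Aⁱ R (Aᵀ)ⁱ`: it is positive semidefinite when
`R` is, and it is monotone in `s` and `R`. The difference `Z = (1 + ε) X - X̃` solves
`Z = s A Z Aᵀ + (ε Q̃ - (1 - η⁻¹) X̃)`. Fixing `η₀ > 1` with `η₀ s ρ(A)² < 1`, every `X̃` with
`η ≤ η₀` is bounded by the series for `(η₀ s, η₀ Q̃)`, a fixed matrix, hence by `t Q̃` for some `t`;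
so the forcing term of `Z` is positive semidefinite, and `Z` with it, as soon as `η - 1 ≤ ε / t`.
-/

open Filter Topology
open scoped MatrixOrder ComplexOrder NNReal ENNReal

namespace Matrix

variable {n 𝕜 : Type*} [Fintype n] [RCLike 𝕜]

theorem isClosed_setOf_posSemidef_s16 : IsClosed {M : Matrix n n 𝕜 | M.PosSemidef} := by
  simp only [posSemidef_iff_dotProduct_mulVec, Set.ofPred_and, Set.ofPred_forall]
  refine (isClosed_eq continuous_id.matrix_conjTranspose continuous_id).inter
    (isClosed_iInter fun x => isClosed_le continuous_const ?_)
  exact continuous_const.dotProduct (continuous_id.matrix_mulVec continuous_const)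

instance orderClosedTopology : OrderClosedTopology (Matrix n n 𝕜) where
  isClosed_le' := isClosed_setOf_posSemidef_s16.preimage (continuous_snd.sub continuous_fst)

end Matrix

theorem IsStrictlyPositive.exists_le_smul {A : Type*} [TopologicalSpace A] [Ring A] [StarRing A]
    [PartialOrder A] [StarOrderedRing A] [Algebra ℝ A] [NonnegSpectrumClass ℝ A]
    [ContinuousFunctionalCalculus ℝ A IsSelfAdjoint] [PosSMulMono ℝ A]
    {a b : A} (ha : IsStrictlyPositive a) (hb : IsSelfAdjoint b) :
    ∃ t : ℝ, 0 < t ∧ b ≤ t • a := by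
  rcases subsingleton_or_nontrivial A with _ | _
  · exact ⟨1, one_pos, (Subsingleton.elim b _).le⟩
  obtain ⟨r, hr, hra⟩ := (CFC.exists_pos_algebraMap_le_iff ha.isSelfAdjoint).2
    fun x hx => ha.spectrum_pos hx
  obtain ⟨R, hR⟩ : BddAbove (spectrum ℝ b) :=
    (ContinuousFunctionalCalculus.isCompact_spectrum b).bddAbove
  refine ⟨max R 1 / r, by positivity, ?_⟩
  calc b ≤ algebraMap ℝ A (max R 1) :=
        le_algebraMap_of_spectrum_le fun x hx => (hR hx).trans (le_max_left _ _)
    _ = (max R 1 / r) • algebraMap ℝ A r := by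
        rw [Algebra.smul_def, ← map_mul, div_mul_cancel₀ _ hr.ne']
    _ ≤ (max R 1 / r) • a := smul_le_smul_of_nonneg_left hra (by positivity)

theorem specRad_nonneg {m : Type*} [Fintype m] [DecidableEq m] (B : Matrix m m ℂ) :
    0 ≤ specRad B :=
  Real.sSup_nonneg fun _ ⟨z, _, hz⟩ => hz ▸ norm_nonneg z

theorem spectralRadius_le_ofReal_specRad {m : Type*} [Fintype m] [DecidableEq m]
    (B : Matrix m m ℂ) : spectralRadius ℂ B ≤ ENNReal.ofReal (specRad B) :=
  iSup₂_le fun z hz => by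
    rw [← ENNReal.ofReal_coe_nnreal, coe_nnnorm]
    exact ENNReal.ofReal_le_ofReal <|
      le_csSup ((B.finite_spectrum.image _).bddAbove) ⟨z, hz, rfl⟩

theorem spectrum.eventually_norm_pow_le_of_spectralRadius_lt {A : Type*} [NormedRing A]
    [NormedAlgebra ℂ A] [CompleteSpace A] {a : A} {r : ℝ≥0} (h : spectralRadius ℂ a < r) :
    ∀ᶠ N in atTop, ‖a ^ N‖ ≤ r ^ N := by
  filter_upwards [(pow_nnnorm_pow_one_div_tendsto_nhds_spectralRadius a).eventually
    (gt_mem_nhds h), eventually_gt_atTop 0] with N hN hN0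
  rw [one_div, ENNReal.rpow_inv_lt_iff (by positivity), ENNReal.rpow_natCast] at hN
  exact_mod_cast hN.le

namespace Matrix

-- The Frobenius norm is submultiplicative and invariant under `ᵀ` and under `map Complex.ofReal`.
open scoped Matrix.Norms.Frobenius

variable {m : Type*} [Fintype m] {A X R : Matrix m m ℝ} {s : ℝ}

theorem one_add_smul_sub_eq_smul_add {Y Q : Matrix m m ℝ} {ε κ : ℝ}
    (hX : X = s • (A * X * Aᵀ) + Q) (hY : κ • Y = s • (A * Y * Aᵀ) + Q) :
    (1 + ε) • X - Y = s • (A * ((1 + ε) • X - Y) * Aᵀ) + (ε • Q - (1 - κ) • Y) := by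
  have eX : s • (A * X * Aᵀ) = X - Q := eq_sub_of_add_eq hX.symm
  have eY : s • (A * Y * Aᵀ) = κ • Y - Q := eq_sub_of_add_eq hY.symm
  rw [Matrix.mul_sub, Matrix.sub_mul, Matrix.mul_smul, Matrix.smul_mul, smul_sub,
    smul_comm s (1 + ε), eX, eY]
  module

variable [DecidableEq m]

theorem summable_pow_mul_norm_pow_sq (A : Matrix m m ℝ) (hs : 0 ≤ s)
    (h : s * specRad (A.map Complex.ofReal) ^ 2 < 1) :
    Summable fun N => s ^ N * ‖A ^ N‖ ^ 2 := by
  set B := A.map Complex.ofReal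
  obtain ⟨r, hBr, hr⟩ : ∃ r > specRad B, s * r ^ 2 < 1 :=
    ((by fun_prop : Continuous fun r : ℝ => s * r ^ 2).continuousAt.eventually_lt
      continuousAt_const h).exists_gt
  lift r to ℝ≥0 using (specRad_nonneg B).trans hBr.le
  have hB : spectralRadius ℂ B < r :=
    (spectralRadius_le_ofReal_specRad B).trans_lt <| by
      simpa using (ENNReal.ofReal_lt_ofReal_iff_of_nonneg (specRad_nonneg B)).2 hBr
  refine .of_norm_bounded_eventually_nat (summable_geometric_of_lt_one (by positivity) hr) ?_
  filter_upwards [spectrum.eventually_norm_pow_le_of_spectralRadius_lt hB] with N hN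
  have hAB : ‖A ^ N‖ = ‖B ^ N‖ := by
    rw [← frobenius_norm_map_eq _ _ Complex.norm_real]
    exact congrArg norm (Matrix.map_pow A Complex.ofRealHom N)
  rw [Real.norm_of_nonneg (by positivity), mul_pow, ← pow_mul, pow_mul', hAB]
  gcongr

theorem norm_pow_smul_mul_mul_transpose_le (hs : 0 ≤ s) (R : Matrix m m ℝ) (N : ℕ) :
    ‖s ^ N • (A ^ N * R * (A ^ N)ᵀ)‖ ≤ s ^ N * ‖A ^ N‖ ^ 2 * ‖R‖ := by
  have hconj : ‖A ^ N * R * (A ^ N)ᵀ‖ ≤ ‖A ^ N‖ ^ 2 * ‖R‖ :=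
    calc ‖A ^ N * R * (A ^ N)ᵀ‖ ≤ ‖A ^ N * R‖ * ‖(A ^ N)ᵀ‖ := frobenius_norm_mul _ _
      _ ≤ ‖A ^ N‖ * ‖R‖ * ‖A ^ N‖ := by
          rw [frobenius_norm_transpose]
          exact mul_le_mul_of_nonneg_right (frobenius_norm_mul _ _) (norm_nonneg _)
      _ = ‖A ^ N‖ ^ 2 * ‖R‖ := by ring
  rw [norm_smul, Real.norm_of_nonneg (pow_nonneg hs N), mul_assoc (s ^ N)]
  exact mul_le_mul_of_nonneg_left hconj (pow_nonneg hs N)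

theorem summable_pow_smul_mul_mul_transpose (hs : 0 ≤ s)
    (hsum : Summable fun N => s ^ N * ‖A ^ N‖ ^ 2) (R : Matrix m m ℝ) :
    Summable fun i => s ^ i • (A ^ i * R * (A ^ i)ᵀ) :=
  .of_norm_bounded (hsum.mul_right ‖R‖) (norm_pow_smul_mul_mul_transpose_le hs R)

theorem eq_pow_smul_add_sum_of_eq_smul_add (h : X = s • (A * X * Aᵀ) + R) (N : ℕ) :
    X = s ^ N • (A ^ N * X * (A ^ N)ᵀ)
      + ∑ i ∈ Finset.range N, s ^ i • (A ^ i * R * (A ^ i)ᵀ) := by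
  induction N with
  | zero => simp
  | succ N ih =>
    have hstep : A ^ N * X * (A ^ N)ᵀ
        = s • (A ^ (N + 1) * X * (A ^ (N + 1))ᵀ) + A ^ N * R * (A ^ N)ᵀ := by
      conv_lhs => rw [h]
      rw [pow_succ, transpose_mul, Matrix.mul_add, Matrix.add_mul, Matrix.mul_smul,
        Matrix.smul_mul]
      simp only [Matrix.mul_assoc]
    calc X = s ^ N • (A ^ N * X * (A ^ N)ᵀ)
          + ∑ i ∈ Finset.range N, s ^ i • (A ^ i * R * (A ^ i)ᵀ) := ih
      _ = _ := by
        rw [hstep, Finset.sum_range_succ, smul_add, smul_smul, ← pow_succ]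
        abel

theorem hasSum_of_eq_smul_add (hs : 0 ≤ s) (hsum : Summable fun N => s ^ N * ‖A ^ N‖ ^ 2)
    (h : X = s • (A * X * Aᵀ) + R) :
    HasSum (fun i => s ^ i • (A ^ i * R * (A ^ i)ᵀ)) X := by
  rw [(summable_pow_smul_mul_mul_transpose hs hsum R).hasSum_iff_tendsto_nat]
  have hrem : Tendsto (fun N => s ^ N • (A ^ N * X * (A ^ N)ᵀ)) atTop (𝓝 0) := by
    refine squeeze_zero_norm (norm_pow_smul_mul_mul_transpose_le hs X) ?_
    simpa using hsum.tendsto_atTop_zero.mul_const ‖X‖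
  have hpartial : ∀ N, ∑ i ∈ Finset.range N, s ^ i • (A ^ i * R * (A ^ i)ᵀ)
      = X - s ^ N • (A ^ N * X * (A ^ N)ᵀ) := fun N =>
    eq_sub_of_add_eq' (eq_pow_smul_add_sum_of_eq_smul_add h N).symm
  exact (sub_zero X ▸ tendsto_const_nhds.sub hrem).congr fun N => (hpartial N).symm

theorem nonneg_of_eq_smul_add (hs : 0 ≤ s) (hsum : Summable fun N => s ^ N * ‖A ^ N‖ ^ 2)
    (h : X = s • (A * X * Aᵀ) + R) (hR : 0 ≤ R) : 0 ≤ X :=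
  (hasSum_of_eq_smul_add hs hsum h).nonneg fun i =>
    smul_nonneg (pow_nonneg hs i) (star_right_conjugate_nonneg hR (A ^ i))

theorem le_tsum_of_eq_smul_add {s₀ : ℝ} {R₀ : Matrix m m ℝ} (hs : 0 ≤ s) (hss₀ : s ≤ s₀)
    (hsum₀ : Summable fun N => s₀ ^ N * ‖A ^ N‖ ^ 2) (hR : 0 ≤ R) (hRR₀ : R ≤ R₀)
    (h : X = s • (A * X * Aᵀ) + R) :
    X ≤ ∑' i, s₀ ^ i • (A ^ i * R₀ * (A ^ i)ᵀ) := by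
  have hsum : Summable fun N => s ^ N * ‖A ^ N‖ ^ 2 :=
    hsum₀.of_nonneg_of_le (fun N => by positivity) fun N => by gcongr
  refine hasSum_le (fun i => ?_) (hasSum_of_eq_smul_add hs hsum h)
    (summable_pow_smul_mul_mul_transpose (hs.trans hss₀) hsum₀ R₀).hasSum
  exact smul_le_smul (pow_le_pow_left₀ hs hss₀ i) (star_right_conjugate_le_conjugate hRR₀ _)
    (pow_nonneg hs i) (star_right_conjugate_nonneg (hR.trans hRR₀) _)

theorem exists_forall_le_smul_of_inv_smul_eq {Q : Matrix m m ℝ} (hQ : Q.PosDef) {η₀ : ℝ}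
    (hη₀ : 0 ≤ η₀) (hs : 0 ≤ s) (hsum₀ : Summable fun N => (η₀ * s) ^ N * ‖A ^ N‖ ^ 2) :
    ∃ t : ℝ, 0 < t ∧ ∀ η : ℝ, ∀ X : Matrix m m ℝ, 0 < η → η ≤ η₀ →
      η⁻¹ • X = s • (A * X * Aᵀ) + Q → X ≤ t • Q := by
  have hQ₀ : 0 ≤ Q := hQ.posSemidef.nonneg
  set Y := ∑' i, (η₀ * s) ^ i • (A ^ i * (η₀ • Q) * (A ^ i)ᵀ)
  have hY : 0 ≤ Y := tsum_nonneg fun i => smul_nonneg (by positivity)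
    (star_right_conjugate_nonneg (smul_nonneg hη₀ hQ₀) (A ^ i))
  obtain ⟨t, ht, hYt⟩ := hQ.isStrictlyPositive.exists_le_smul hY.isSelfAdjoint
  refine ⟨t, ht, fun η X hη hηη₀ hX => ?_⟩
  have hX' : X = (η * s) • (A * X * Aᵀ) + η • Q := by
    rw [mul_smul, ← smul_add, ← hX, smul_inv_smul₀ hη.ne']
  exact (le_tsum_of_eq_smul_add (by positivity) (mul_le_mul_of_nonneg_right hηη₀ hs) hsum₀
    (smul_nonneg hη.le hQ₀) (smul_le_smul_of_nonneg_right hηη₀ hQ₀) hX').trans hYt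

end Matrix

/-- Continuity of the Lyapunov solution: if `X` solves
`X = (1−q) A X Aᵀ + Q̃` and `X̃` solves `η⁻¹ X̃ = (1−q) A X̃ Aᵀ + Q̃`, then for
any `ε > 0` there is `δ > 0` such that `1 < η ≤ 1 + δ` implies
`X̃ ≤ (1+ε) X` in the Loewner order. -/
theorem lyapunov_continuity {n : ℕ} (A : Matrix (Fin n) (Fin n) ℝ)
    (q : ℝ) (hq : q ∈ Set.Ioo (0 : ℝ) 1)
    (Qt : Matrix (Fin n) (Fin n) ℝ) (hQt : Qt.PosDef) :
    ∀ ε > (0 : ℝ), ∃ δ > (0 : ℝ),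
      ∀ η : ℝ, 1 < η → η ≤ 1 + δ →
        η * (1 - q) * specRad (A.map Complex.ofReal) ^ 2 < 1 →
        ∀ X Xt : Matrix (Fin n) (Fin n) ℝ,
          X.PosDef → X = (1 - q) • (A * X * Aᵀ) + Qt →
          Xt.PosDef → η⁻¹ • Xt = (1 - q) • (A * Xt * Aᵀ) + Qt →
          ((1 + ε) • X - Xt).PosSemidef := by
  intro ε hε
  set ρ := specRad (A.map Complex.ofReal)
  have hs : 0 ≤ 1 - q := by linarith [hq.2]
  by_cases hρ : (1 - q) * ρ ^ 2 < 1
  swap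
  · refine ⟨1, one_pos, fun η hη _ hηρ => absurd hηρ ?_⟩
    nlinarith [mul_nonneg hs (sq_nonneg ρ)]
  obtain ⟨η₀, hη₀, hη₀ρ⟩ : ∃ η₀ > 1, η₀ * (1 - q) * ρ ^ 2 < 1 :=
    ((by fun_prop : Continuous fun η : ℝ => η * (1 - q) * ρ ^ 2).continuousAt.eventually_lt
      continuousAt_const (by simpa using hρ)).exists_gt
  obtain ⟨t, ht, hbound⟩ := exists_forall_le_smul_of_inv_smul_eq hQt (by linarith) hs
    (summable_pow_mul_norm_pow_sq A (by positivity) hη₀ρ)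
  refine ⟨min (η₀ - 1) (ε / t), lt_min (by linarith) (by positivity),
    fun η hη hηδ _ X Xt _ hX _ hXt => ?_⟩
  have hXt_le : Xt ≤ t • Qt :=
    hbound η Xt (by linarith) (by linarith [min_le_left (η₀ - 1) (ε / t)]) hXt
  have hc : (1 - η⁻¹) * t ≤ ε := by
    have : 1 - η⁻¹ ≤ ε / t := by
      have := inv_lt_one_of_one_lt₀ hη
      nlinarith [mul_inv_cancel₀ (by linarith : η ≠ 0), min_le_right (η₀ - 1) (ε / t)]
    rwa [le_div_iff₀ ht] at this
  have hC : (1 - η⁻¹) • Xt ≤ ε • Qt := calc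
    (1 - η⁻¹) • Xt ≤ (1 - η⁻¹) • (t • Qt) :=
      smul_le_smul_of_nonneg_left hXt_le (sub_nonneg.2 (inv_le_one_of_one_le₀ hη.le))
    _ ≤ ε • Qt := by
      rw [smul_smul]
      exact smul_le_smul_of_nonneg_right hc hQt.posSemidef.nonneg
  rw [← nonneg_iff_posSemidef]
  exact nonneg_of_eq_smul_add hs (summable_pow_mul_norm_pow_sq A hs hρ)
    (one_add_smul_sub_eq_smul_add hX hXt) (sub_nonneg.2 hC)
end
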